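/- arXiv:0804.1884 — 5 statements merged into one kernel-verified Lean document; each statement's English description precedes it below -/
import Mathlib

section
/- (Lemma 2.1) Suppose |J| ≥ 2 and all T_j > 0. If inf_{j∈J} T_j < 1, then 𝔉_T^+ = ∅, i.e. there is no fixed point concentrated on (0,∞). -/
/-!
Choose `j` with `T j < 1`. All factors of the fixed-point product lie in `[0, 1]`, so
`F̄(t) ≤ F̄(t / T j)`; iterating, `F̄(t) ≤ F̄(t / (T j)^n) → 0` for every `t > 0`.
Hence a fixed point puts no mass on `(0, ∞)`.
-/

open MeasureTheory Set

/-- `μ ∈ 𝔉_T`: `μ` is a (distributional) fixed point of the min-type equation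
`W =d inf_{j∈J} T_j W_j` for a family of positive weights `T`, expressed via the
survival function `F̄(t) = μ [t, ∞)`. -/
def MemFP {ι : Type*} [Countable ι] (T : ι → ℝ) (μ : Measure ℝ) : Prop :=
  IsProbabilityMeasure μ ∧
    ∀ t : ℝ, (μ (Ici t)).toReal = ∏' j, (μ (Ici (t / T j))).toReal

/-- `μ ∈ 𝔉_T^+`: a fixed point concentrated on `(0, ∞)`. -/
def MemFPpos {ι : Type*} [Countable ι] (T : ι → ℝ) (μ : Measure ℝ) : Prop :=
  MemFP T μ ∧ μ (Ioi 0) = 1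

open Filter Topology

lemma tprod_le_of_nonneg_of_le_one {ι : Type*} {f : ι → ℝ} (hf0 : ∀ i, 0 ≤ f i)
    (hf1 : ∀ i, f i ≤ 1) (j : ι) : ∏' i, f i ≤ f j := by
  classical
  have hanti : Antitone fun s : Finset ι => ∏ i ∈ s, f i :=
    Finset.prod_anti_set_of_le_one hf0 hf1
  have hbdd : BddBelow (range fun s : Finset ι => ∏ i ∈ s, f i) :=
    ⟨0, by rintro _ ⟨s, rfl⟩; exact Finset.prod_nonneg fun i _ => hf0 i⟩
  -- the product genuinely converges, so `∏'` is not its junk value `1`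
  have hprod : HasProd f (⨅ s : Finset ι, ∏ i ∈ s, f i) := tendsto_atTop_ciInf hanti hbdd
  rw [hprod.tprod_eq]
  exact (ciInf_le hbdd {j}).trans_eq (Finset.prod_singleton f j)

lemma tendsto_measure_Ici_atTop (μ : Measure ℝ) [IsFiniteMeasure μ] :
    Tendsto (fun x => μ (Ici x)) atTop (𝓝 0) := by
  have hempty : ⋂ x : ℝ, Ici x = ∅ :=
    eq_empty_of_forall_notMem fun x hx => (lt_add_one x).not_ge (mem_iInter.1 hx (x + 1))
  simpa [Function.comp_def, hempty] using tendsto_measure_iInter_atTop (μ := μ)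
    (fun _ => measurableSet_Ici.nullMeasurableSet) (fun _ _ => Ici_subset_Ici.2)
    ⟨0, measure_ne_top μ _⟩

lemma measure_Ici_eq_zero_of_le_measure_Ici_div {μ : Measure ℝ} [IsFiniteMeasure μ] {c : ℝ}
    (hc0 : 0 < c) (hc1 : c < 1) (h : ∀ t, 0 < t → μ (Ici t) ≤ μ (Ici (t / c)))
    {t : ℝ} (ht : 0 < t) : μ (Ici t) = 0 := by
  have hiter : ∀ n : ℕ, μ (Ici t) ≤ μ (Ici (t / c ^ n)) := by
    intro n
    induction n with
    | zero => simp
    | succ n ih =>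
      calc μ (Ici t) ≤ μ (Ici (t / c ^ n)) := ih
        _ ≤ μ (Ici (t / c ^ n / c)) := h _ (by positivity)
        _ = μ (Ici (t / c ^ (n + 1))) := by rw [div_div, pow_succ]
  have hlim : Tendsto (fun n : ℕ => t / c ^ n) atTop atTop := by
    simpa [div_eq_mul_inv, inv_pow] using
      (tendsto_pow_atTop_atTop_of_one_lt ((one_lt_inv₀ hc0).2 hc1)).const_mul_atTop ht
  exact le_antisymm (ge_of_tendsto' ((tendsto_measure_Ici_atTop μ).comp hlim) hiter) bot_le

lemma measure_Ioi_eq_zero_of_forall_measure_Ici {μ : Measure ℝ} {a : ℝ}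
    (h : ∀ t, a < t → μ (Ici t) = 0) : μ (Ioi a) = 0 := by
  have hlim : Tendsto (fun n : ℕ => a + 1 / ((n : ℝ) + 1)) atTop (𝓝 a) := by
    simpa using tendsto_one_div_add_atTop_nhds_zero_nat.const_add a
  rw [← iUnion_Ici_eq_Ioi_of_lt_of_tendsto (fun n => lt_add_of_pos_right a (by positivity)) hlim]
  exact measure_iUnion_null fun n => h _ (lt_add_of_pos_right a (by positivity))

lemma MemFP.measure_Ici_le_measure_Ici_div {ι : Type*} [Countable ι] {T : ι → ℝ}
    {μ : Measure ℝ} (h : MemFP T μ) (t : ℝ) (j : ι) : μ (Ici t) ≤ μ (Ici (t / T j)) := by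
  obtain ⟨hprob, hfix⟩ := h
  rw [← ENNReal.toReal_le_toReal (measure_ne_top μ _) (measure_ne_top μ _), hfix t]
  exact tprod_le_of_nonneg_of_le_one (fun _ => ENNReal.toReal_nonneg)
    (fun _ => measureReal_le_one) j

/-- (Lemma 2.1) If `inf_j T_j < 1` then `𝔉_T^+ = ∅`. -/
theorem stmt4 {ι : Type*} [Countable ι] (T : ι → ℝ)
    (hcard : ∃ j k : ι, j ≠ k) (hT : ∀ j, 0 < T j)
    (hinf : (⨅ j, T j) < 1) :
    ∀ μ : Measure ℝ, ¬ MemFPpos T μ := by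
  rintro μ ⟨hfp, hpos⟩
  have : IsProbabilityMeasure μ := hfp.1
  have : Nonempty ι := let ⟨j, _, _⟩ := hcard; ⟨j⟩
  obtain ⟨j, hj⟩ := exists_lt_of_ciInf_lt hinf
  have hIci : ∀ t, 0 < t → μ (Ici t) = 0 := fun t ht =>
    measure_Ici_eq_zero_of_le_measure_Ici_div (hT j) hj
      (fun s _ => hfp.measure_Ici_le_measure_Ici_div s j) ht
  simp [measure_Ioi_eq_zero_of_forall_measure_Ici hIci] at hpos
end

section
/- (Corollary 2.2) Suppose |J| ≥ 2, all T_j > 0 and inf_{j∈J} T_j ≥ 1. If T_j = 1 for all j ∈ J, then 𝔉_T = {δ_c : c ∈ ℝ}; otherwise 𝔉_T = {δ_0} ∪ 𝔉_T^+. -/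
/-!
Truncating the infinite product to two factors gives `F̄(t) ≤ F̄(t / T j) * F̄(t / T k)` for
`j ≠ k`. If `T j = T k = 1` this reads `F̄(t) ≤ F̄(t)²`, so `F̄` only takes the values `0` and `1`
and `F` is a Dirac measure. If `1 < T k`, then for `t < 0` with `F̄(t) > 0` the bound
`F̄(t / T j) ≤ F̄(t)` forces `F̄(t / T k) = 1`; iterating along `t / T kⁿ ↑ 0` shows that `F`
puts no mass on `(-∞, 0)`. For `t > 0` both factors are at most `q = P(W > 0)`, so `q ≤ q²`,
i.e. `q = 0` (then `F = δ₀`) or `q = 1`. Conversely `δ_c` is a fixed point as soon as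
`t / T j ≤ c ↔ t ≤ c`, which holds for every `c` when all `T j = 1` and for `c = 0` in general.
-/

open MeasureTheory Set

open Filter Topology

/-- In `ℝ` the infimum of a family that is not bounded below is the junk value `0`, so a
positive lower bound on `⨅ i, f i` bounds every `f i`. -/
lemma le_of_le_iInf_of_pos {ι : Type*} {f : ι → ℝ} {a : ℝ} (ha : 0 < a) (h : a ≤ ⨅ i, f i)
    (i : ι) : a ≤ f i := by
  have hbdd : BddBelow (range f) := by
    by_contra hf
    rw [Real.iInf_of_not_bddBelow hf] at h
    linarith
  exact h.trans (ciInf_le hbdd i)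

lemma tprod_le_prod_of_nonneg_of_le_one {ι : Type*} {a : ι → ℝ} (h0 : ∀ i, 0 ≤ a i)
    (h1 : ∀ i, a i ≤ 1) (s : Finset ι) : ∏' i, a i ≤ ∏ i ∈ s, a i := by
  have hbdd : BddBelow (range fun s : Finset ι => ∏ i ∈ s, a i) :=
    ⟨0, by rintro _ ⟨s, rfl⟩; exact Finset.prod_nonneg fun i _ => h0 i⟩
  have hprod : HasProd a (⨅ s : Finset ι, ∏ i ∈ s, a i) :=
    tendsto_atTop_ciInf (Finset.prod_anti_set_of_le_one h0 h1) hbdd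
  exact hprod.tprod_eq ▸ ciInf_le hbdd s

lemma ENNReal.eq_zero_or_eq_one_of_le_mul_self {x : ENNReal} (h1 : x ≤ 1) (h : x ≤ x * x) :
    x = 0 ∨ x = 1 := by
  refine or_iff_not_imp_left.2 fun h0 => le_antisymm h1 ?_
  have htop : x ≠ ⊤ := ne_top_of_le_ne_top ENNReal.one_ne_top h1
  exact (ENNReal.mul_le_mul_iff_right h0 htop).1 (by rwa [mul_one])

lemma isZeroOneMeasure_of_measure_Ici {α : Type*} [TopologicalSpace α] [LinearOrder α]
    [OrderTopology α] [SecondCountableTopology α] [MeasurableSpace α] [BorelSpace α]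
    {μ : Measure α} [IsProbabilityMeasure μ]
    (h : ∀ t, μ (Ici t) = 0 ∨ μ (Ici t) = 1) : IsZeroOneMeasure μ := by
  refine ⟨fun s hs => ?_⟩
  induction s, hs using MeasurableSpace.induction_on_inter
    (BorelSpace.measurable_eq.trans (borel_eq_generateFrom_Ici α)) isPiSystem_Ici with
  | empty => exact Or.inl measure_empty
  | basic _ ht => obtain ⟨t, rfl⟩ := ht; exact h t
  | compl s hs ih => rwa [prob_compl_eq_zero_iff hs, prob_compl_eq_one_iff hs, or_comm]
  | iUnion f _ _ ih =>
    by_cases hf : ∃ n, μ (f n) = 1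
    · obtain ⟨n, hn⟩ := hf
      exact Or.inr (le_antisymm prob_le_one (hn ▸ measure_mono (subset_iUnion f n)))
    · push Not at hf
      exact Or.inl (measure_iUnion_null fun n => (ih n).resolve_right (hf n))

section FixedPoint

variable {ι : Type*} [Countable ι] {T : ι → ℝ} {μ : Measure ℝ}

lemma memFP_dirac [Nonempty ι] {c : ℝ} (hT : ∀ t j, t / T j ≤ c ↔ t ≤ c) :
    MemFP T (Measure.dirac c) := by
  refine ⟨inferInstance, fun t => ?_⟩
  simp only [Measure.dirac_apply' c measurableSet_Ici, indicator_apply, mem_Ici, hT]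
  split_ifs <;> simp

lemma MemFP.measure_Ici_le_mul (hμ : MemFP T μ) {j k : ι} (hjk : j ≠ k) (t : ℝ) :
    μ (Ici t) ≤ μ (Ici (t / T j)) * μ (Ici (t / T k)) := by
  classical
  have := hμ.1
  rw [← ENNReal.toReal_le_toReal (measure_ne_top _ _)
    (ENNReal.mul_ne_top (measure_ne_top _ _) (measure_ne_top _ _)), ENNReal.toReal_mul,
    hμ.2 t, ← Finset.prod_pair (f := fun i => (μ (Ici (t / T i))).toReal) hjk]
  exact tprod_le_prod_of_nonneg_of_le_one (fun _ => ENNReal.toReal_nonneg)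
    (fun _ => measureReal_le_one) _

lemma MemFP.exists_dirac_eq (hμ : MemFP T μ) {j k : ι} (hjk : j ≠ k) (hj : T j = 1)
    (hk : T k = 1) : ∃ c, Measure.dirac c = μ := by
  have := hμ.1
  have : IsZeroOneMeasure μ := isZeroOneMeasure_of_measure_Ici fun t =>
    ENNReal.eq_zero_or_eq_one_of_le_mul_self prob_le_one
      (by simpa [hj, hk] using hμ.measure_Ici_le_mul hjk t)
  obtain ⟨c, hc⟩ := IsZeroOneMeasure.exists_eq_dirac (μ := μ)
  exact ⟨c, hc.symm⟩

lemma MemFP.measure_Ici_div_eq_one (hμ : MemFP T μ) {j k : ι} (hjk : j ≠ k) (hj : 1 ≤ T j)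
    {t : ℝ} (ht : t < 0) (h0 : μ (Ici t) ≠ 0) : μ (Ici (t / T k)) = 1 := by
  have := hμ.1
  have htj : t ≤ t / T j := by
    rw [le_div_iff₀ (by linarith)]
    nlinarith
  have h : μ (Ici t) * 1 ≤ μ (Ici t) * μ (Ici (t / T k)) :=
    calc μ (Ici t) * 1 = μ (Ici t) := mul_one _
    _ ≤ μ (Ici (t / T j)) * μ (Ici (t / T k)) := hμ.measure_Ici_le_mul hjk t
    _ ≤ μ (Ici t) * μ (Ici (t / T k)) := by gcongr
  exact le_antisymm prob_le_one ((ENNReal.mul_le_mul_iff_right h0 (measure_ne_top _ _)).1 h)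

lemma MemFP.measure_Iio_zero (hμ : MemFP T μ) {j k : ι} (hjk : j ≠ k) (hj : 1 ≤ T j)
    (hk : 1 < T k) : μ (Iio 0) = 0 := by
  have := hμ.1
  obtain ⟨s, hs0, hs⟩ : ∃ s : ℝ, μ (Ici s) ≠ 0 ∧ s < 0 := by
    have h1 := tendsto_measure_Ici_atBot μ
    rw [measure_univ] at h1
    exact ((h1.eventually (eventually_ne_nhds one_ne_zero)).and (eventually_lt_atBot 0)).exists
  have hneg : ∀ n : ℕ, s / T k ^ n < 0 := fun n => div_neg_of_neg_of_pos hs (by positivity)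
  have hpos : ∀ n : ℕ, μ (Ici (s / T k ^ n)) ≠ 0 := by
    intro n
    induction n with
    | zero => simpa using hs0
    | succ n ih =>
      rw [pow_succ, ← div_div, hμ.measure_Ici_div_eq_one hjk hj (hneg n) ih]
      exact one_ne_zero
  have hlim : Tendsto (fun n : ℕ => s / T k ^ n) atTop (𝓝 0) :=
    tendsto_const_nhds.div_atTop (tendsto_pow_atTop_atTop_of_one_lt hk)
  have hcover : Iio (0 : ℝ) ⊆ ⋃ n : ℕ, Iio (s / T k ^ (n + 1)) := fun x hx =>
    mem_iUnion.2 (((tendsto_add_atTop_iff_nat 1).2 hlim).eventually (lt_mem_nhds hx)).exists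
  refine measure_mono_null hcover (measure_iUnion_null fun n => ?_)
  rw [← compl_Ici, prob_compl_eq_zero_iff measurableSet_Ici, pow_succ, ← div_div]
  exact hμ.measure_Ici_div_eq_one hjk hj (hneg n) (hpos n)

lemma MemFP.measure_Ioi_zero_eq_zero_or_one (hμ : MemFP T μ) {j k : ι} (hjk : j ≠ k)
    (hj : 0 < T j) (hk : 0 < T k) : μ (Ioi 0) = 0 ∨ μ (Ioi 0) = 1 := by
  have := hμ.1
  refine ENNReal.eq_zero_or_eq_one_of_le_mul_self prob_le_one ?_
  have hunion : ⋃ n : ℕ, Ici (1 / ((n : ℝ) + 1)) = Ioi 0 :=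
    iUnion_Ici_eq_Ioi_of_lt_of_tendsto (fun n => by positivity)
      tendsto_one_div_add_atTop_nhds_zero_nat
  have hmono : Monotone fun n : ℕ => Ici (1 / ((n : ℝ) + 1)) := fun m n hmn =>
    Ici_subset_Ici.2 (one_div_le_one_div_of_le (by positivity) (by gcongr))
  calc μ (Ioi 0) = ⨆ n : ℕ, μ (Ici (1 / ((n : ℝ) + 1))) := by
        rw [← hunion, hmono.measure_iUnion]
  _ ≤ μ (Ioi 0) * μ (Ioi 0) := by
    refine iSup_le fun n => (hμ.measure_Ici_le_mul hjk _).trans ?_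
    have ht : (0 : ℝ) < 1 / ((n : ℝ) + 1) := by positivity
    exact mul_le_mul' (measure_mono (Ici_subset_Ioi.2 (div_pos ht hj)))
      (measure_mono (Ici_subset_Ioi.2 (div_pos ht hk)))

end FixedPoint

lemma eq_dirac_zero_of_measure_Iio_of_measure_Ioi {μ : Measure ℝ} [IsProbabilityMeasure μ]
    (hlt : μ (Iio 0) = 0) (hgt : μ (Ioi 0) = 0) : μ = Measure.dirac 0 := by
  refine Measure.ext_of_Ici _ _ fun t => ?_
  rw [Measure.dirac_apply' _ measurableSet_Ici]
  rcases le_or_gt t 0 with ht | ht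
  · rw [indicator_of_mem (mem_Ici.2 ht), Pi.one_apply, ← prob_compl_eq_zero_iff measurableSet_Ici,
      compl_Ici]
    exact measure_mono_null (Iio_subset_Iio ht) hlt
  · rw [indicator_of_notMem (notMem_Ici.2 ht)]
    exact measure_mono_null (Ici_subset_Ioi.2 ht) hgt

theorem stmt5_general {ι : Type*} [Countable ι] (T : ι → ℝ)
    (hcard : ∃ j k : ι, j ≠ k)
    (hinf : 1 ≤ ⨅ j, T j) :
    ((∀ j, T j = 1) →
      {μ : Measure ℝ | MemFP T μ} = Set.range (fun c : ℝ => Measure.dirac c)) ∧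
    ((¬ ∀ j, T j = 1) →
      {μ : Measure ℝ | MemFP T μ} =
        insert (Measure.dirac 0) {μ : Measure ℝ | MemFPpos T μ}) := by
  have hT : ∀ j, 1 ≤ T j := le_of_le_iInf_of_pos one_pos hinf
  have hTpos : ∀ j, 0 < T j := fun j => one_pos.trans_le (hT j)
  obtain ⟨j₀, k₀, hjk₀⟩ := hcard
  have : Nontrivial ι := nontrivial_of_ne j₀ k₀ hjk₀
  refine ⟨fun hone => ?_, fun hone => ?_⟩
  · ext μ
    refine ⟨fun hμ => hμ.exists_dirac_eq hjk₀ (hone j₀) (hone k₀), ?_⟩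
    rintro ⟨c, rfl⟩
    exact memFP_dirac fun t j => by rw [hone j, div_one]
  · obtain ⟨k, hk⟩ := not_forall.1 hone
    obtain ⟨j, hjk⟩ := exists_ne k
    ext μ
    refine ⟨fun hμ => ?_, ?_⟩
    · have := hμ.1
      rcases hμ.measure_Ioi_zero_eq_zero_or_one hjk (hTpos j) (hTpos k) with h | h
      · exact Or.inl (eq_dirac_zero_of_measure_Iio_of_measure_Ioi
          (hμ.measure_Iio_zero hjk (hT j) ((hT k).lt_of_ne' hk)) h)
      · exact Or.inr ⟨hμ, h⟩
    · rintro (rfl | hμ)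
      · exact memFP_dirac fun t j => by rw [div_le_iff₀ (hTpos j), zero_mul]
      · exact hμ.1

/-- (Corollary 2.2) Suppose `inf_j T_j ≥ 1`. If `T_j = 1` for all `j`, then
`𝔉_T = {δ_c : c ∈ ℝ}`; otherwise `𝔉_T = {δ_0} ∪ 𝔉_T^+`. -/
theorem stmt5 {ι : Type*} [Countable ι] (T : ι → ℝ)
    (hcard : ∃ j k : ι, j ≠ k) (hT : ∀ j, 0 < T j)
    (hinf : 1 ≤ ⨅ j, T j) :
    ((∀ j, T j = 1) →
      {μ : Measure ℝ | MemFP T μ} = Set.range (fun c : ℝ => Measure.dirac c)) ∧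
    ((¬ ∀ j, T j = 1) →
      {μ : Measure ℝ | MemFP T μ} =
        insert (Measure.dirac 0) {μ : Measure ℝ | MemFPpos T μ}) :=
  stmt5_general T hcard hinf
end

section
/- (Lemma 3.1, first part) Suppose |J| ≥ 2, all T_j > 0 and inf_{j∈J} T_j > 1 (with, in case J = ℕ, either J finite or lim_{j→∞} T_j = ∞; in fact the proof only uses inf_{j∈J} T_j > 1). Then every F ∈ 𝔉_T^+ satisfies l_F = 0, i.e. F(t) > 0 for every t > 0. -/
/-! Let `c = inf_j T_j > 1`. If `F(s) = 0` for some `s ≥ 0`, then `s c / T_j ≤ s` for every `j`, so all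
factors of `F̄(s c) = ∏_j F̄(s c / T_j)` equal `1` and `F(s c) = 0`. Iterating, `F(s c^n) = 0` for all
`n`; since `c^n → ∞`, a zero `F(t) = 0` with `t > 0` would force `F ≡ 0`. -/

open MeasureTheory Set

/-- `l_F = sup {t ≥ 0 : F(t) = 0}`, where `F(t) = μ (-∞, t)`. -/
noncomputable def lF (μ : Measure ℝ) : ℝ :=
  sSup {t : ℝ | 0 ≤ t ∧ μ (Iio t) = 0}

lemma measure_Ici_eq_one_iff_measure_Iio_eq_zero {μ : Measure ℝ} [IsProbabilityMeasure μ]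
    {t : ℝ} : μ (Ici t) = 1 ↔ μ (Iio t) = 0 := by
  rw [← prob_compl_eq_zero_iff measurableSet_Ici, compl_Ici]

lemma Measure.eq_zero_of_forall_measure_Iio_natCast_eq_zero {μ : Measure ℝ}
    (h : ∀ n : ℕ, μ (Iio n) = 0) : μ = 0 := by
  have hcover : (⋃ n : ℕ, Iio (n : ℝ)) = univ := iUnion_eq_univ_iff.2 exists_nat_gt
  rw [← Measure.measure_univ_eq_zero, ← hcover]
  exact measure_iUnion_null h

lemma Real.iInf_le_of_pos_iInf {ι : Type*} {T : ι → ℝ} (h : 0 < ⨅ j, T j) (j : ι) :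
    ⨅ i, T i ≤ T j := by
  refine ciInf_le ?_ j
  by_contra hT
  rw [Real.iInf_of_not_bddBelow hT] at h
  exact h.false

namespace MemFP

variable {ι : Type*} [Countable ι] {T : ι → ℝ} {μ : Measure ℝ} {c : ℝ}

lemma measure_Iio_mul_eq_zero (hμ : MemFP T μ) (hc : 0 < c) (hcT : ∀ j, c ≤ T j) {s : ℝ}
    (hs : 0 ≤ s) (h : μ (Iio s) = 0) : μ (Iio (s * c)) = 0 := by
  have := hμ.1
  have hfactor : ∀ j, (μ (Ici (s * c / T j))).toReal = 1 := by
    intro j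
    have hle : s * c / T j ≤ s :=
      (div_le_iff₀ (hc.trans_le (hcT j))).2 (mul_le_mul_of_nonneg_left (hcT j) hs)
    rw [ENNReal.toReal_eq_one_iff]
    refine le_antisymm prob_le_one ?_
    calc (1 : ENNReal) = μ (Ici s) := (measure_Ici_eq_one_iff_measure_Iio_eq_zero.2 h).symm
      _ ≤ μ (Ici (s * c / T j)) := measure_mono (Ici_subset_Ici.2 hle)
  have hfix := hμ.2 (s * c)
  rw [tprod_congr hfactor, tprod_one, ENNReal.toReal_eq_one_iff] at hfix
  exact measure_Ici_eq_one_iff_measure_Iio_eq_zero.1 hfix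

lemma measure_Iio_mul_pow_eq_zero (hμ : MemFP T μ) (hc : 0 < c) (hcT : ∀ j, c ≤ T j) {s : ℝ}
    (hs : 0 ≤ s) (h : μ (Iio s) = 0) (n : ℕ) : μ (Iio (s * c ^ n)) = 0 := by
  induction n with
  | zero => simpa using h
  | succ n ih =>
    rw [pow_succ, ← mul_assoc]
    exact hμ.measure_Iio_mul_eq_zero hc hcT (by positivity) ih

theorem measure_Iio_pos (hμ : MemFP T μ) (hinf : 1 < ⨅ j, T j) {t : ℝ} (ht : 0 < t) :
    0 < μ (Iio t) := by
  have := hμ.1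
  refine pos_iff_ne_zero.2 fun h ↦ IsProbabilityMeasure.ne_zero μ ?_
  refine Measure.eq_zero_of_forall_measure_Iio_natCast_eq_zero fun n ↦ ?_
  obtain ⟨k, hk⟩ := pow_unbounded_of_one_lt (n / t) hinf
  refine measure_mono_null (Iio_subset_Iio ?_)
    (hμ.measure_Iio_mul_pow_eq_zero (one_pos.trans hinf)
      (Real.iInf_le_of_pos_iInf (one_pos.trans hinf)) ht.le h k)
  rw [div_lt_iff₀ ht] at hk
  linarith

end MemFP

lemma lF_eq_zero_of_measure_Iio_pos {μ : Measure ℝ} (h0 : μ (Iio 0) = 0)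
    (hpos : ∀ t : ℝ, 0 < t → 0 < μ (Iio t)) : lF μ = 0 := by
  have hset : {t : ℝ | 0 ≤ t ∧ μ (Iio t) = 0} = {0} := by
    ext t
    refine ⟨fun ⟨ht, hμt⟩ ↦ ?_, fun ht ↦ ⟨ht.ge, ht ▸ h0⟩⟩
    by_contra hne
    exact (hpos t (lt_of_le_of_ne ht (Ne.symm hne))).ne' hμt
  rw [lF, hset, csSup_singleton]

theorem stmt10_general {ι : Type*} [Countable ι] (T : ι → ℝ)
    (hinf : 1 < ⨅ j, T j) :
    ∀ μ : Measure ℝ, MemFPpos T μ →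
      lF μ = 0 ∧ ∀ t : ℝ, 0 < t → 0 < μ (Iio t) := by
  intro μ ⟨hfix, hsupp⟩
  have := hfix.1
  have hpos : ∀ t : ℝ, 0 < t → 0 < μ (Iio t) := fun t ht ↦ hfix.measure_Iio_pos hinf ht
  have h0 : μ (Iio 0) = 0 :=
    measure_mono_null (fun x hx ↦ not_lt.2 (le_of_lt hx))
      ((prob_compl_eq_zero_iff measurableSet_Ioi).2 hsupp)
  exact ⟨lF_eq_zero_of_measure_Iio_pos h0 hpos, hpos⟩

/-- (Lemma 3.1, first part) If `inf_j T_j > 1`, then every `F ∈ 𝔉_T^+`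
satisfies `l_F = 0`, i.e. `F(t) > 0` for every `t > 0`. -/
theorem stmt10 {ι : Type*} [Countable ι] (T : ι → ℝ)
    (hcard : ∃ j k : ι, j ≠ k) (hT : ∀ j, 0 < T j)
    (hinf : 1 < ⨅ j, T j) :
    ∀ μ : Measure ℝ, MemFPpos T μ →
      lF μ = 0 ∧ ∀ t : ℝ, 0 < t → 0 < μ (Iio t) :=
  stmt10_general T hinf
end

section
/- (Lemma 3.1, second part) Suppose J is finite with |J| ≥ 2, all T_j > 0 and inf_{j∈J} T_j > 1. Then every F ∈ 𝔉_T^+ satisfies u_F = ∞, i.e. F̄(t) > 0 for every t > 0. -/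
/-!
If `F̄(t₀) = 0` for some `t₀ > 0`, the fixed-point equation makes one factor `F̄(t₀ / T_j)`
vanish, hence also `F̄(t₀ / c)` with `c = inf_j T_j > 1`. Iterating, `F̄(t₀ / cⁿ) = 0` for
all `n`, and since `t₀ / cⁿ → 0` the measure gives no mass to `(0, ∞)`.
-/

open MeasureTheory Set

namespace MemFP

variable {ι : Type*} [Fintype ι] {T : ι → ℝ} {μ : Measure ℝ}

theorem exists_survival_eq_zero (hμ : MemFP T μ) {t : ℝ} (ht : μ (Ici t) = 0) :
    ∃ j, μ (Ici (t / T j)) = 0 := by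
  have := hμ.1
  have hprod : ∏ j, (μ (Ici (t / T j))).toReal = 0 := by
    simpa [ht, tprod_fintype] using (hμ.2 t).symm
  obtain ⟨j, -, hj⟩ := Finset.prod_eq_zero_iff.mp hprod
  exact ⟨j, (ENNReal.toReal_eq_zero_iff _).mp hj |>.resolve_right (measure_ne_top μ _)⟩

theorem survival_div_eq_zero (hμ : MemFP T μ) {c : ℝ} (hc : 0 < c) (hcT : ∀ j, c ≤ T j)
    {t : ℝ} (ht₀ : 0 ≤ t) (ht : μ (Ici t) = 0) : μ (Ici (t / c)) = 0 := by
  obtain ⟨j, hj⟩ := hμ.exists_survival_eq_zero ht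
  exact measure_mono_null (Ici_subset_Ici.mpr (div_le_div_of_nonneg_left ht₀ hc (hcT j))) hj

theorem survival_div_pow_eq_zero (hμ : MemFP T μ) {c : ℝ} (hc : 0 < c) (hcT : ∀ j, c ≤ T j)
    {t : ℝ} (ht₀ : 0 ≤ t) (ht : μ (Ici t) = 0) (n : ℕ) : μ (Ici (t / c ^ n)) = 0 := by
  induction n with
  | zero => simpa using ht
  | succ n ih =>
    rw [pow_succ, ← div_div]
    exact hμ.survival_div_eq_zero hc hcT (by positivity) ih

theorem measure_Ioi_zero_eq_zero (hμ : MemFP T μ) {c : ℝ} (hc : 1 < c) (hcT : ∀ j, c ≤ T j)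
    {t : ℝ} (ht₀ : 0 ≤ t) (ht : μ (Ici t) = 0) : μ (Ioi 0) = 0 := by
  have hcover : Ioi (0 : ℝ) ⊆ ⋃ n : ℕ, Ici (t / c ^ n) := by
    intro x (hx : 0 < x)
    obtain ⟨n, hn⟩ := pow_unbounded_of_one_lt (t / x) hc
    refine mem_iUnion.mpr ⟨n, div_le_of_le_mul₀ (by positivity) hx.le ?_⟩
    rw [div_lt_iff₀ hx] at hn
    linarith
  exact measure_mono_null hcover
    (measure_iUnion_null (hμ.survival_div_pow_eq_zero (by linarith) hcT ht₀ ht))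

end MemFP

theorem MemFPpos.survival_pos {ι : Type*} [Fintype ι] {T : ι → ℝ} {μ : Measure ℝ}
    (hμ : MemFPpos T μ) (hinf : 1 < ⨅ j, T j) (t : ℝ) : 0 < μ (Ici t) := by
  rw [pos_iff_ne_zero]
  intro ht
  rcases le_or_gt 0 t with ht₀ | ht₀
  · have hcT : ∀ j, ⨅ j, T j ≤ T j := ciInf_le (Finite.bddBelow_range T)
    have := hμ.1.measure_Ioi_zero_eq_zero hinf hcT ht₀ ht
    simp [hμ.2] at this
  · have := measure_mono_null (Ioi_subset_Ici ht₀.le) ht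
    simp [hμ.2] at this

theorem stmt11_general {ι : Type*} [Fintype ι] (T : ι → ℝ)
    (hinf : 1 < ⨅ j, T j) :
    ∀ μ : Measure ℝ, MemFPpos T μ →
      {t : ℝ | 0 ≤ t ∧ μ (Iio t) = 1} = ∅ ∧ ∀ t : ℝ, 0 < t → 0 < μ (Ici t) := by
  intro μ hμ
  have := hμ.1.1
  refine ⟨eq_empty_of_forall_notMem fun t ⟨_, ht⟩ => ?_, fun t _ => hμ.survival_pos hinf t⟩
  have hcompl : μ (Ici t) = 0 := by
    rw [← compl_Iio, prob_compl_eq_zero_iff measurableSet_Iio]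
    exact ht
  exact (hμ.survival_pos hinf t).ne' hcompl

/-- (Lemma 3.1, second part) If `J` is finite with `|J| ≥ 2` and
`inf_j T_j > 1`, then every `F ∈ 𝔉_T^+` satisfies `u_F = ∞`, i.e.
`{t ≥ 0 : F(t) = 1} = ∅`, equivalently `F̄(t) > 0` for every `t > 0`. -/
theorem stmt11 {ι : Type*} [Fintype ι] (T : ι → ℝ)
    (hcard : ∃ j k : ι, j ≠ k) (hT : ∀ j, 0 < T j)
    (hinf : 1 < ⨅ j, T j) :
    ∀ μ : Measure ℝ, MemFPpos T μ →
      {t : ℝ | 0 ≤ t ∧ μ (Iio t) = 1} = ∅ ∧ ∀ t : ℝ, 0 < t → 0 < μ (Ici t) :=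
  stmt11_general T hinf
end

section
/- (Theorem 5.1(b)) Let J = ℕ and T_j < 0 for all j ∈ ℕ. Then 𝔉_T = {δ_0}, i.e. the Dirac measure at 0 is the only fixed point. -/
open MeasureTheory Set

/-- `μ ∈ 𝔉_T` for a family of negative weights `T` indexed by `ℕ`: the fixed
point equation `W =d inf_j T_j W_j` reads `F̄(t) = ∏_j F((t/T_j)+)`, i.e.
`μ [t, ∞) = ∏_j μ (-∞, t/T_j]` in terms of the measure `μ`. -/
def MemFPNeg (T : ℕ → ℝ) (μ : Measure ℝ) : Prop :=
  IsProbabilityMeasure μ ∧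
    ∀ t : ℝ, (μ (Ici t)).toReal = ∏' j, (μ (Iic (t / T j))).toReal

/-!
At `t = 0` the fixed-point equation reads `μ [0, ∞) = c ^ ∞` with `c = μ (-∞, 0]`. If `c < 1`
the right side vanishes, so `μ` lives on `(-∞, 0)` and `c = 1` after all. Hence both half-lines
carry full mass and `μ = δ₀`. Conversely `δ₀` is a fixed point since `t / T j` has the sign
opposite to `t`.
-/

open Filter Topology

lemma hasProd_const_of_tendsto_pow {M β : Type*} [CommMonoid M] [TopologicalSpace M] [Infinite β]
    {c a : M} (h : Tendsto (c ^ ·) atTop (𝓝 a)) : HasProd (fun _ : β ↦ c) a := by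
  have hcard : Tendsto (fun s : Finset β ↦ s.card) atTop atTop := by
    refine tendsto_atTop.2 fun n ↦ ?_
    obtain ⟨s, hs⟩ := Infinite.exists_subset_card_eq β n
    filter_upwards [eventually_ge_atTop s] with t ht
    exact hs ▸ Finset.card_le_card ht
  simpa [HasProd, Function.comp_def] using h.comp hcard

lemma eq_dirac_of_measure_Iic_eq_one_of_measure_Ici_eq_one {α : Type*}
    [MeasurableSpace α] [TopologicalSpace α] [PartialOrder α] [OrderClosedTopology α]
    [OpensMeasurableSpace α] {μ : Measure α} [IsProbabilityMeasure μ] {a : α}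
    (hIic : μ (Iic a) = 1) (hIci : μ (Ici a) = 1) : μ = Measure.dirac a := by
  have hle : ∀ᵐ x ∂μ, x ∈ Iic a := by
    rwa [ae_mem_iff_measure_eq measurableSet_Iic.nullMeasurableSet, measure_univ]
  have hge : ∀ᵐ x ∂μ, x ∈ Ici a := by
    rwa [ae_mem_iff_measure_eq measurableSet_Ici.nullMeasurableSet, measure_univ]
  have hae : id =ᵐ[μ] fun _ ↦ a := by
    filter_upwards [hle, hge] with x hxa hax using le_antisymm hxa hax
  simpa using (ProbabilityTheory.hasLaw_dirac_of_ae_eq hae).map_eq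

lemma measure_Iic_eq_one_of_measure_Ici_eq_tprod {μ : Measure ℝ} [IsProbabilityMeasure μ] {a : ℝ}
    (h : (μ (Ici a)).toReal = ∏' _ : ℕ, (μ (Iic a)).toReal) : μ (Iic a) = 1 := by
  by_contra hne
  have hlt : (μ (Iic a)).toReal < 1 := by
    simpa using (ENNReal.toReal_lt_toReal (measure_ne_top _ _) ENNReal.one_ne_top).2
      (prob_le_one.lt_of_ne hne)
  rw [(hasProd_const_of_tendsto_pow
    (tendsto_pow_atTop_nhds_zero_of_lt_one ENNReal.toReal_nonneg hlt)).tprod_eq] at h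
  have hIio : μ (Iio a) = 1 := by
    rw [← compl_Ici, prob_compl_eq_one_iff measurableSet_Ici]
    exact ((ENNReal.toReal_eq_zero_iff _).1 h).resolve_right (measure_ne_top _ _)
  exact hne (le_antisymm prob_le_one (hIio ▸ measure_mono Iio_subset_Iic_self))

lemma eq_dirac_of_measure_Ici_eq_tprod {μ : Measure ℝ} [IsProbabilityMeasure μ] {a : ℝ}
    (h : (μ (Ici a)).toReal = ∏' _ : ℕ, (μ (Iic a)).toReal) : μ = Measure.dirac a := by
  have hIic := measure_Iic_eq_one_of_measure_Ici_eq_tprod h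
  refine eq_dirac_of_measure_Iic_eq_one_of_measure_Ici_eq_one hIic ?_
  exact (ENNReal.toReal_eq_one_iff _).1 (by simpa [hIic] using h)

lemma dirac_zero_memFPNeg {T : ℕ → ℝ} (hT : ∀ j, T j < 0) : MemFPNeg T (Measure.dirac 0) := by
  refine ⟨inferInstance, fun t ↦ ?_⟩
  rcases le_or_gt t 0 with ht | ht
  · have hIic : ∀ j, (0 : ℝ) ∈ Iic (t / T j) := fun j ↦ div_nonneg_of_nonpos ht (hT j).le
    simp [Measure.dirac_apply_of_mem (mem_Ici.2 ht), Measure.dirac_apply_of_mem (hIic _)]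
  · have hIic : ∀ j, (0 : ℝ) ∉ Iic (t / T j) := fun j ↦ not_le.2 (div_neg_of_pos_of_neg ht (hT j))
    simp [hIic, not_le.2 ht]

/-- (Theorem 5.1(b)) If `J = ℕ` and all `T_j < 0`, then `𝔉_T = {δ_0}`. -/
theorem stmt18 (T : ℕ → ℝ) (hT : ∀ j, T j < 0) :
    {μ : Measure ℝ | MemFPNeg T μ} = {Measure.dirac 0} := by
  ext μ
  refine ⟨fun ⟨hμ, hfix⟩ ↦ eq_dirac_of_measure_Ici_eq_tprod (by simpa using hfix 0), ?_⟩
  rintro rfl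
  exact dirac_zero_memFPNeg hT
end
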